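/- Let G be a connected k-regular finite simple graph on n vertices with adjacency matrix A, whose distinct adjacency eigenvalues are k = θ_0 > θ_1 > ... > θ_d with d ≥ 3 and θ_d ≠ −1 and θ_0 > 0. Let Δ_3 = max_{u ∈ V(G)} (A³)_{uu}, and suppose there exists a largest eigenvalue θ_s among θ_0,...,θ_d with θ_s ≤ −(θ_0² + θ_0 θ_d − Δ_3) / (θ_0 (θ_d + 1)), and that s ≥ 1. Then eq_4(G) ≤ n · (Δ_3 − θ_0(θ_s + θ_{s−1} + θ_d) − θ_s θ_{s−1} θ_d) / ((θ_0 − θ_s)(θ_0 − θ_{s−1})(θ_0 − θ_d)). -/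

import Mathlib

open SimpleGraph

/-- `S` is a `t`-equidistant set of `G`: all distinct vertices of `S` are at distance
exactly `t` in `G`. -/
def IsEquidistantSet {V : Type*} (G : SimpleGraph V) (t : ℕ) (S : Finset V) : Prop :=
  (S : Set V).Pairwise fun u v => G.dist u v = t

/-- The `t`-equidistant number of `G`: the maximum size of a `t`-equidistant set. -/
noncomputable def eqNum {V : Type*} [Fintype V] (G : SimpleGraph V) (t : ℕ) : ℕ :=
  sSup {n : ℕ | ∃ S : Finset V, IsEquidistantSet G t S ∧ S.card = n}

/-- `S` is a `t`-independent set of `G`: all distinct vertices of `S` are at pairwise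
distance greater than `t` in `G`. -/
def IsTIndepSet {V : Type*} (G : SimpleGraph V) (t : ℕ) (S : Finset V) : Prop :=
  (S : Set V).Pairwise fun u v => t < G.dist u v

/-- The `t`-independence number of `G`. -/
noncomputable def indepNumT {V : Type*} [Fintype V] (G : SimpleGraph V) (t : ℕ) : ℕ :=
  sSup {n : ℕ | ∃ S : Finset V, IsTIndepSet G t S ∧ S.card = n}

/-- The equidistant number of `G`: `max {eq_t(G) : 1 ≤ t ≤ diam G}`. -/
noncomputable def eqTotalNum {V : Type*} [Fintype V] (G : SimpleGraph V) : ℕ :=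
  (Finset.Icc 1 G.diam).sup (eqNum G)

/-!
Put `p(t) = (t - θ_s)(t - θ_{s-1})(t - θ_d)`. Since `θ_s` and `θ_{s-1}` are consecutive
eigenvalues, `p` is nonnegative on the spectrum of `A`, so `p(A)` is positive semidefinite; and
since `deg p = 3 < 4`, `p(A)` vanishes between distinct vertices of a 4-equidistant set `S`.
Testing `p(A)` against the indicator vector of `S`, split along the all-ones eigenvector
(eigenvalue `p(k)`), gives `p(k) |S|² / n ≤ ∑_{u ∈ S} p(A)_{uu} ≤ |S| N`, where
`N = Δ_3 - k(θ_s + θ_{s-1} + θ_d) - θ_s θ_{s-1} θ_d` bounds the diagonal of `p(A)`.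
For `s = 1` we have `p(k) = 0`, but then the condition on `θ_1` and `θ_d < -1` give `N ≤ 0`,
so the positive semidefinite `p(A)` would vanish, whereas `p(θ_2) ≠ 0`.
-/

open Matrix Polynomial Finset

section Spectral

variable {n : Type*} [Fintype n] [DecidableEq n] {A : Matrix n n ℝ}

theorem Matrix.aeval_mulVec_of_mulVec_eq_smul {v : n → ℝ} {μ : ℝ} (hv : A *ᵥ v = μ • v)
    (q : ℝ[X]) : aeval A q *ᵥ v = q.eval μ • v := by
  induction q using Polynomial.induction_on' with
  | add p q hp hq => simp only [map_add, add_mulVec, hp, hq, eval_add, add_smul]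
  | monomial m a =>
    have hpow : A ^ m *ᵥ v = μ ^ m • v := by
      induction m with
      | zero => simp
      | succ m ih => rw [pow_succ', ← mulVec_mulVec, ih, mulVec_smul, hv, smul_smul, pow_succ]
    rw [aeval_monomial, Algebra.algebraMap_eq_smul_one, smul_mul_assoc, one_mul, smul_mulVec,
      hpow, smul_smul, eval_monomial]

omit [DecidableEq n] in
theorem Matrix.PosSemidef.mul_sq_dotProduct_le {M : Matrix n n ℝ} (hM : M.PosSemidef)
    {v : n → ℝ} {μ : ℝ} (hv : M *ᵥ v = μ • v) (x : n → ℝ) :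
    μ * (x ⬝ᵥ v) ^ 2 ≤ (v ⬝ᵥ v) * (x ⬝ᵥ (M *ᵥ x)) := by
  have hsymm : ∀ y, v ⬝ᵥ (M *ᵥ y) = μ * (v ⬝ᵥ y) := fun y => by
    rw [dotProduct_mulVec, ← mulVec_transpose, ← conjTranspose_eq_transpose_of_trivial,
      hM.isHermitian.eq, hv, smul_dotProduct, smul_eq_mul]
  -- test `M` against the component of `x` orthogonal to `v`
  have key := hM.dotProduct_mulVec_nonneg ((v ⬝ᵥ v) • x - (x ⬝ᵥ v) • v)
  simp only [star_trivial, mulVec_sub, mulVec_smul, hv, sub_dotProduct, dotProduct_sub,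
    smul_dotProduct, dotProduct_smul, hsymm, smul_eq_mul, dotProduct_comm v x] at key
  obtain hv0 | hvpos := (dotProduct_self_star_nonneg v).eq_or_lt
  · simp [dotProduct_self_star_eq_zero.mp hv0.symm]
  · rw [star_trivial] at hvpos
    have := (mul_nonneg_iff_of_pos_left hvpos).mp
      (show 0 ≤ (v ⬝ᵥ v) * ((v ⬝ᵥ v) * (x ⬝ᵥ (M *ᵥ x)) - μ * (x ⬝ᵥ v) ^ 2) by
        linear_combination key)
    linarith

theorem Matrix.PosSemidef.mul_card_le {M : Matrix n n ℝ} (hM : M.PosSemidef) {μ N : ℝ}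
    (hM1 : M *ᵥ 1 = μ • 1) {S : Finset n} (hS : S.Nonempty) (hdiag : ∀ u ∈ S, M u u ≤ N)
    (hoff : ∀ u ∈ S, ∀ v ∈ S, u ≠ v → M u v = 0) :
    μ * #S ≤ Fintype.card n * N := by
  set x : n → ℝ := fun u => if u ∈ S then 1 else 0
  have hx1 : x ⬝ᵥ 1 = #S := by simp [x, dotProduct_one]
  have h11 : (1 : n → ℝ) ⬝ᵥ 1 = Fintype.card n := by simp [dotProduct_one]
  have hxMx : x ⬝ᵥ (M *ᵥ x) = ∑ u ∈ S, M u u := by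
    simp only [x, dotProduct, mulVec, ite_mul, one_mul, zero_mul, mul_ite, mul_one, mul_zero,
      sum_ite_mem, univ_inter]
    exact sum_congr rfl fun u hu =>
      sum_eq_single_of_mem u hu fun v hv hvu => hoff u hu v hv hvu.symm
  have hbound := hM.mul_sq_dotProduct_le hM1 x
  rw [hx1, hxMx, h11] at hbound
  have hsum : ∑ u ∈ S, M u u ≤ #S * N := by simpa using sum_le_sum hdiag
  have hSpos : (0 : ℝ) < #S := by exact_mod_cast hS.card_pos
  nlinarith

theorem Matrix.IsHermitian.posSemidef_aeval (hA : A.IsHermitian) {q : ℝ[X]}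
    (hq : ∀ i, 0 ≤ q.eval (hA.eigenvalues i)) : (aeval A q).PosSemidef := by
  open scoped MatrixOrder in
  rw [← cfc_polynomial q A, ← nonneg_iff_posSemidef]
  refine cfc_nonneg fun x hx => ?_
  rw [hA.spectrum_real_eq_range_eigenvalues] at hx
  obtain ⟨i, rfl⟩ := hx
  exact hq i

theorem Matrix.IsHermitian.exists_aeval_apply_self_pos (hA : A.IsHermitian) {q : ℝ[X]}
    (hq : ∀ i, 0 ≤ q.eval (hA.eigenvalues i)) {i : n} (hi : q.eval (hA.eigenvalues i) ≠ 0) :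
    ∃ u, 0 < aeval A q u u := by
  by_contra! h
  have hM := hA.posSemidef_aeval hq
  have hzero : aeval A q = 0 :=
    hM.trace_eq_zero_iff.mp (sum_eq_zero fun u _ => (h u).antisymm hM.diag_nonneg)
  have hvec := aeval_mulVec_of_mulVec_eq_smul (hA.mulVec_eigenvectorBasis i) q
  rw [hzero, zero_mulVec, eq_comm, smul_eq_zero] at hvec
  exact hvec.elim hi fun h =>
    hA.eigenvectorBasis.orthonormal.ne_zero i ((WithLp.ofLp_eq_zero 2).mp h)

end Spectral

theorem cubic_nonneg_of_strictAntiOn {θ : ℕ → ℝ} {d s j : ℕ}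
    (hθ : StrictAntiOn θ (Set.Iic d)) (hs : 1 ≤ s) (hsd : s ≤ d) (hj : j ≤ d) :
    0 ≤ (θ j - θ s) * (θ j - θ (s - 1)) * (θ j - θ d) := by
  have hdj : 0 ≤ θ j - θ d := sub_nonneg.mpr (hθ.antitoneOn hj Set.self_mem_Iic hj)
  rcases lt_or_ge j s with hjs | hsj
  · have h1 : θ s ≤ θ j := hθ.antitoneOn hj hsd hjs.le
    have h2 : θ (s - 1) ≤ θ j := hθ.antitoneOn hj (by omega : s - 1 ≤ d) (by omega)
    exact mul_nonneg (mul_nonneg (sub_nonneg.mpr h1) (sub_nonneg.mpr h2)) hdj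
  · have h1 : θ j ≤ θ s := hθ.antitoneOn hsd hj hsj
    have h2 : θ j ≤ θ (s - 1) := hθ.antitoneOn (by omega : s - 1 ≤ d) hj (by omega)
    exact mul_nonneg (mul_nonneg_of_nonpos_of_nonpos (by linarith) (by linarith)) hdj

section Equidistant

variable {V : Type*} [Fintype V] (G : SimpleGraph V)

theorem bddAbove_card_isEquidistantSet (t : ℕ) :
    BddAbove {m | ∃ S, IsEquidistantSet G t S ∧ #S = m} :=
  bddAbove_def.mpr ⟨Fintype.card V, by rintro _ ⟨S, -, rfl⟩; exact card_le_univ S⟩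

theorem exists_isEquidistantSet_card_eq_eqNum (t : ℕ) :
    ∃ S, IsEquidistantSet G t S ∧ #S = eqNum G t :=
  Nat.sSup_mem (s := {m | ∃ S, IsEquidistantSet G t S ∧ #S = m})
    ⟨0, ∅, by simp [IsEquidistantSet], rfl⟩ (bddAbove_card_isEquidistantSet G t)

theorem one_le_eqNum [Nonempty V] (t : ℕ) : 1 ≤ eqNum G t := by
  apply le_csSup (bddAbove_card_isEquidistantSet G t)
  exact ⟨{Classical.arbitrary V}, by simp [IsEquidistantSet], card_singleton _⟩

variable {G} [DecidableEq V] [DecidableRel G.Adj]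

theorem SimpleGraph.adjMatrix_pow_apply_eq_zero_of_lt_dist {α : Type*} [Semiring α] {m : ℕ}
    {u v : V} (h : m < G.dist u v) : (G.adjMatrix α ^ m) u v = 0 := by
  rw [adjMatrix_pow_apply_eq_card_walk, Fintype.card_eq_zero_iff.mpr, Nat.cast_zero]
  exact ⟨fun q => (h.trans_le (q.2 ▸ dist_le q.1)).false⟩

theorem SimpleGraph.aeval_adjMatrix_apply_eq_zero_of_natDegree_lt_dist {α : Type*}
    [CommSemiring α] {q : α[X]} {u v : V} (h : q.natDegree < G.dist u v) :
    aeval (G.adjMatrix α) q u v = 0 := by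
  rw [aeval_eq_sum_range, Matrix.sum_apply]
  exact sum_eq_zero fun i hi => by
    rw [Matrix.smul_apply, adjMatrix_pow_apply_eq_zero_of_lt_dist (by grind), smul_zero]

theorem IsEquidistantSet.aeval_adjMatrix_apply_eq_zero {α : Type*} [CommSemiring α] {t : ℕ}
    {S : Finset V} (hS : IsEquidistantSet G t S) {q : α[X]} (hq : q.natDegree < t)
    {u v : V} (hu : u ∈ S) (hv : v ∈ S) (huv : u ≠ v) : aeval (G.adjMatrix α) q u v = 0 :=
  aeval_adjMatrix_apply_eq_zero_of_natDegree_lt_dist (hS hu hv huv ▸ hq)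

end Equidistant

namespace SimpleGraph

variable {V : Type*} [Fintype V] [DecidableEq V] {G : SimpleGraph V} [DecidableRel G.Adj]

theorem le_neg_one_of_le_eigenvalues (hA : (G.adjMatrix ℝ).IsHermitian) {c : ℝ}
    (hc : ∀ i, c ≤ hA.eigenvalues i) {u w : V} (huw : G.Adj u w) : c ≤ -1 := by
  have hM := hA.posSemidef_aeval (q := X - C c) fun i => by simpa using hc i
  have key := hM.dotProduct_mulVec_nonneg (Pi.single u 1 - Pi.single w 1)
  simp only [star_trivial, aeval_sub, aeval_X, aeval_C, Algebra.algebraMap_eq_smul_one,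
    mulVec_sub, mulVec_single, MulOpposite.op_one, one_smul, dotProduct_sub, sub_dotProduct,
    single_dotProduct, col_apply, Matrix.sub_apply, adjMatrix_apply, G.irrefl, if_false,
    Matrix.smul_apply, one_apply_eq, smul_eq_mul, mul_one, zero_sub, mul_neg, one_mul, huw,
    huw.symm, huw.ne, huw.ne.symm, ne_eq, not_false_eq_true, one_apply_ne, if_true, mul_zero,
    sub_zero, sub_neg_eq_add] at key
  linarith

namespace IsRegularOfDegree

variable {k : ℕ} (hreg : G.IsRegularOfDegree k)
include hreg

omit [DecidableEq V] in
theorem adjMatrix_mulVec_one : G.adjMatrix ℝ *ᵥ 1 = (k : ℝ) • 1 := by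
  ext v
  simpa using adjMatrix_mulVec_const_apply_of_regular (a := (1 : ℝ)) hreg (v := v)

theorem aeval_cubic_adjMatrix_apply_self (a b c : ℝ) (u : V) :
    aeval (G.adjMatrix ℝ) ((X - C a) * (X - C b) * (X - C c)) u u =
      (G.adjMatrix ℝ ^ 3) u u - k * (a + b + c) - a * b * c := by
  have hexpand : (X - C a) * (X - C b) * (X - C c) =
      X ^ 3 - (a + b + c) • X ^ 2 + (a * b + a * c + b * c) • X - C (a * b * c) := by
    simp only [smul_eq_C_mul, map_add, map_mul]; ring
  have hsq : (G.adjMatrix ℝ ^ 2) u u = k := by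
    rw [sq, adjMatrix_mul_self_apply_self, hreg u]
  simp only [hexpand, map_sub, map_add, map_smul, map_pow, aeval_X, aeval_C,
    Algebra.algebraMap_eq_smul_one, Matrix.sub_apply, Matrix.add_apply, Matrix.smul_apply,
    one_apply_eq, smul_eq_mul, hsq, adjMatrix_apply, G.irrefl, if_false]
  ring

variable (hA : (G.adjMatrix ℝ).IsHermitian)

section Cubic

variable {a b c : ℝ}
  (hp : ∀ i, 0 ≤ ((X - C a) * (X - C b) * (X - C c)).eval (hA.eigenvalues i))
include hp

theorem cubic_mul_eqNum_four_le [Nonempty V] {Δ : ℝ}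
    (hΔ : ∀ u, (G.adjMatrix ℝ ^ 3) u u ≤ Δ) :
    (k - a) * (k - b) * (k - c) * eqNum G 4 ≤
      Fintype.card V * (Δ - k * (a + b + c) - a * b * c) := by
  obtain ⟨S, hS, hcard⟩ := exists_isEquidistantSet_card_eq_eqNum G 4
  have key := (hA.posSemidef_aeval hp).mul_card_le (N := Δ - k * (a + b + c) - a * b * c)
    (aeval_mulVec_of_mulVec_eq_smul hreg.adjMatrix_mulVec_one _)
    (card_pos.mp (hcard ▸ one_le_eqNum G 4))
    (fun u _ => by rw [hreg.aeval_cubic_adjMatrix_apply_self]; linarith [hΔ u])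
    (fun u hu v hv huv => hS.aeval_adjMatrix_apply_eq_zero (by compute_degree!) hu hv huv)
  simpa [hcard] using key

theorem exists_lt_adjMatrix_pow_three_apply_self {i : V}
    (hi : ((X - C a) * (X - C b) * (X - C c)).eval (hA.eigenvalues i) ≠ 0) :
    ∃ u, k * (a + b + c) + a * b * c < (G.adjMatrix ℝ ^ 3) u u := by
  obtain ⟨u, hu⟩ := hA.exists_aeval_apply_self_pos hp hi
  rw [hreg.aeval_cubic_adjMatrix_apply_self] at hu
  exact ⟨u, by linarith⟩

end Cubic

theorem threshold_lt_eigenvalue_one [Nonempty V] {d : ℕ} (hd : 3 ≤ d)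
    {θ : ℕ → ℝ} (hθ : StrictAntiOn θ (Set.Iic d)) (hθ0 : θ 0 = k) (hθ0pos : 0 < θ 0)
    (hspec : {x : ℝ | ∃ j ≤ d, θ j = x} = Set.range hA.eigenvalues) (hθd : θ d ≠ -1)
    {Δ : ℝ} (hΔ : ∀ u, (G.adjMatrix ℝ ^ 3) u u ≤ Δ) :
    -(θ 0 ^ 2 + θ 0 * θ d - Δ) / (θ 0 * (θ d + 1)) < θ 1 := by
  have hev : ∀ i, hA.eigenvalues i ∈ {x | ∃ j ≤ d, θ j = x} := fun i =>
    hspec ▸ ⟨i, rfl⟩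
  have hθd1 : θ d < -1 := by
    obtain ⟨w, huw⟩ := (G.degree_pos_iff_exists_adj (Classical.arbitrary V)).mp
      (by rw [hreg]; exact_mod_cast hθ0 ▸ hθ0pos)
    refine (le_neg_one_of_le_eigenvalues hA (fun i => ?_) huw).lt_of_ne hθd
    obtain ⟨j, hj, hji⟩ := hev i
    exact hji ▸ hθ.antitoneOn hj Set.self_mem_Iic hj
  have h10 : θ 1 < θ 0 := hθ (by simp) (by simp; omega) one_pos
  have h21 : θ 2 < θ 1 := hθ (by simp; omega) (by simp; omega) one_lt_two
  have hd2 : θ d < θ 2 := hθ (by simp; omega) Set.self_mem_Iic (by omega)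
  obtain ⟨i, hi⟩ : θ 2 ∈ Set.range hA.eigenvalues := hspec ▸ ⟨2, by omega, rfl⟩
  obtain ⟨u, hu⟩ := hreg.exists_lt_adjMatrix_pow_three_apply_self hA (a := θ 1) (b := θ 0)
    (c := θ d) (fun i => by
      obtain ⟨j, hj, hji⟩ := hev i
      simpa [← hji] using cubic_nonneg_of_strictAntiOn hθ le_rfl (by omega) hj) (i := i) (by
      simp only [hi, eval_mul, eval_sub, eval_X, eval_C]
      exact (mul_pos (mul_pos_of_neg_of_neg (by linarith) (by linarith)) (by linarith)).ne')
  rw [← hθ0] at hu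
  rw [div_lt_iff_of_neg (by nlinarith)]
  linarith [hΔ u]

end IsRegularOfDegree

end SimpleGraph

theorem eqNum_four_le_ratio_bound_general {V : Type*} [Fintype V] [DecidableEq V]
    (G : SimpleGraph V) [DecidableRel G.Adj] (hG : G.Connected)
    (n : ℕ) (hn : Fintype.card V = n)
    (k : ℕ) (hreg : G.IsRegularOfDegree k)
    (hA : (G.adjMatrix ℝ).IsHermitian)
    (d : ℕ) (hd : 3 ≤ d) (θ : ℕ → ℝ)
    (hθstrict : ∀ j l : ℕ, j < l → l ≤ d → θ l < θ j)
    (hθ0 : θ 0 = (k : ℝ))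
    (hspec : {x : ℝ | ∃ j ≤ d, θ j = x} = Set.range hA.eigenvalues)
    (hθd : θ d ≠ -1) (hθ0pos : (0 : ℝ) < θ 0)
    (Δ3 : ℝ) (hΔ3 : IsGreatest (Set.range fun u : V => ((G.adjMatrix ℝ) ^ 3) u u) Δ3)
    (s : ℕ) (hsd : s ≤ d) (hs1 : 1 ≤ s)
    (hsle : θ s ≤ -(θ 0 ^ 2 + θ 0 * θ d - Δ3) / (θ 0 * (θ d + 1))) :
    (eqNum G 4 : ℝ) ≤
      n * (Δ3 - θ 0 * (θ s + θ (s - 1) + θ d) - θ s * θ (s - 1) * θ d) /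
        ((θ 0 - θ s) * (θ 0 - θ (s - 1)) * (θ 0 - θ d)) := by
  subst hn
  have := hG.nonempty
  have hθ : StrictAntiOn θ (Set.Iic d) := fun j hj l hl hjl => hθstrict j l hjl hl
  obtain rfl | hs2 := hs1.eq_or_lt
  · exact absurd hsle <| not_le.mpr <|
      hreg.threshold_lt_eigenvalue_one hA hd hθ hθ0 hθ0pos hspec hθd fun u => hΔ3.2 ⟨u, rfl⟩
  have hp : ∀ i, 0 ≤ ((X - C (θ s)) * (X - C (θ (s - 1))) * (X - C (θ d))).eval
      (hA.eigenvalues i) := fun i => by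
    obtain ⟨j, hj, hji⟩ : hA.eigenvalues i ∈ {x | ∃ j ≤ d, θ j = x} :=
      hspec ▸ ⟨i, rfl⟩
    simpa [← hji] using cubic_nonneg_of_strictAntiOn hθ hs1 hsd hj
  have h1 := hθstrict 0 (s - 1) (by omega) (by omega)
  have h2 := hθstrict (s - 1) s (by omega) hsd
  have h3 : θ d ≤ θ s := hθ.antitoneOn hsd Set.self_mem_Iic hsd
  rw [le_div_iff₀ (by apply mul_pos (mul_pos _ _) _ <;> linarith), mul_comm, hθ0]
  simpa using hreg.cubic_mul_eqNum_four_le hA hp fun u => hΔ3.2 ⟨u, rfl⟩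

/-- best Ratio-type bound for `t = 4`. Let `G` be a connected `k`-regular
graph on `n` vertices with distinct adjacency eigenvalues `k = θ_0 > θ_1 > ⋯ > θ_d`,
`d ≥ 3`, `θ_d ≠ -1`, `θ_0 > 0`. With `Δ_3 = max_u (A³)_{uu}`, let `θ_s` be the largest
eigenvalue with `θ_s ≤ -(θ_0² + θ_0 θ_d - Δ_3)/(θ_0 (θ_d + 1))`, and suppose `s ≥ 1`. Then
`eq_4(G) ≤ n (Δ_3 - θ_0(θ_s + θ_{s-1} + θ_d) - θ_s θ_{s-1} θ_d)
  / ((θ_0-θ_s)(θ_0-θ_{s-1})(θ_0-θ_d))`. -/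
theorem eqNum_four_le_ratio_bound {V : Type*} [Fintype V] [DecidableEq V]
    (G : SimpleGraph V) [DecidableRel G.Adj] (hG : G.Connected)
    (n : ℕ) (hn : Fintype.card V = n)
    (k : ℕ) (hreg : G.IsRegularOfDegree k)
    (hA : (G.adjMatrix ℝ).IsHermitian)
    (d : ℕ) (hd : 3 ≤ d) (θ : ℕ → ℝ)
    (hθstrict : ∀ j l : ℕ, j < l → l ≤ d → θ l < θ j)
    (hθ0 : θ 0 = (k : ℝ))
    (hspec : {x : ℝ | ∃ j ≤ d, θ j = x} = Set.range hA.eigenvalues)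
    (hθd : θ d ≠ -1) (hθ0pos : (0 : ℝ) < θ 0)
    (Δ3 : ℝ) (hΔ3 : IsGreatest (Set.range fun u : V => ((G.adjMatrix ℝ) ^ 3) u u) Δ3)
    (s : ℕ) (hsd : s ≤ d) (hs1 : 1 ≤ s)
    (hsle : θ s ≤ -(θ 0 ^ 2 + θ 0 * θ d - Δ3) / (θ 0 * (θ d + 1)))
    (hsmax : ∀ j ≤ d, θ j ≤ -(θ 0 ^ 2 + θ 0 * θ d - Δ3) / (θ 0 * (θ d + 1)) → θ j ≤ θ s) :
    (eqNum G 4 : ℝ) ≤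
      n * (Δ3 - θ 0 * (θ s + θ (s - 1) + θ d) - θ s * θ (s - 1) * θ d) /
        ((θ 0 - θ s) * (θ 0 - θ (s - 1)) * (θ 0 - θ d)) :=
  eqNum_four_le_ratio_bound_general G hG n hn k hreg hA d hd θ hθstrict hθ0 hspec hθd hθ0pos Δ3 hΔ3
    s hsd hs1 hsle
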